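/- Let f₁,…,f₁₀ be the ten quintics of the classifying map, in the stated order. For all y₁, y₂, y₃, y₄ ∈ ℂ, regard each fᵢ(ty₁, ty₂, ty₃, ty₄, 1) as a polynomial in t. Then its coefficients of t⁰, t¹, t² are 0 and its coefficient of t³ equals −gᵢ, where (g₁,…,g₁₀) = (y₁(y₂²−y₃²), y₁(y₃²−y₄²), y₂(y₁²−y₃²), y₂(y₁²−y₄²), y₃(y₁²−y₂²), y₃(y₁²−y₄²), y₄(y₁²−y₂²), y₄(y₁²−y₃²), 0, 0). Hence the map induced by Φ on the exceptional divisor over the point (0:0:0:0:1) sends (y₁:y₂:y₃:y₄) to (y₁(y₂²−y₃²) : y₁(y₃²−y₄²) : … : y₄(y₁²−y₂²) : y₄(y₁²−y₃²) : 0 : 0) ∈ ℙ⁹. -/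

import Mathlib

/-!
Substituting `x = (t y₁, t y₂, t y₃, t y₄, 1)`, a factor `xₐ` with `a ≤ 4` contributes `t`, a
factor `xₐ² − x_b²` with `a, b ≤ 4` contributes `t²`, and a factor `xₐ² − x₅²` contributes
`−1 + O(t²)`. So `f₉, f₁₀` are divisible by `t⁴`, and every other `fᵢ` equals `−gᵢ t³ + O(t⁵)`.
-/

/-- The ten quintics `f₁,…,f₁₀` giving the classifying map `Φ : ℙ⁴ ⇢ ℙ⁹`
(indices 0-based: `v 0 = x₁, …, v 4 = x₅`). -/
def quintics {R : Type*} [CommRing R] (v : Fin 5 → R) : Fin 10 → R :=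
  ![v 0 * (v 1 ^ 2 - v 2 ^ 2) * (v 3 ^ 2 - v 4 ^ 2),
    v 0 * (v 1 ^ 2 - v 4 ^ 2) * (v 2 ^ 2 - v 3 ^ 2),
    v 1 * (v 0 ^ 2 - v 2 ^ 2) * (v 3 ^ 2 - v 4 ^ 2),
    v 1 * (v 0 ^ 2 - v 3 ^ 2) * (v 2 ^ 2 - v 4 ^ 2),
    v 2 * (v 0 ^ 2 - v 1 ^ 2) * (v 3 ^ 2 - v 4 ^ 2),
    v 2 * (v 0 ^ 2 - v 3 ^ 2) * (v 1 ^ 2 - v 4 ^ 2),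
    v 3 * (v 0 ^ 2 - v 1 ^ 2) * (v 2 ^ 2 - v 4 ^ 2),
    v 3 * (v 0 ^ 2 - v 2 ^ 2) * (v 1 ^ 2 - v 4 ^ 2),
    v 4 * (v 0 ^ 2 - v 1 ^ 2) * (v 2 ^ 2 - v 3 ^ 2),
    v 4 * (v 0 ^ 2 - v 3 ^ 2) * (v 1 ^ 2 - v 2 ^ 2)]

open Polynomial

namespace Polynomial

variable {R : Type*} [CommRing R]

theorem coeff_of_X_pow_succ_dvd_sub_C_mul_X_pow {p : R[X]} {a : R} {n : ℕ}
    (h : X ^ (n + 1) ∣ p - C a * X ^ n) : (∀ j < n, p.coeff j = 0) ∧ p.coeff n = a := by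
  have hcoeff := X_pow_dvd_iff.mp h
  refine ⟨fun j hj => ?_, ?_⟩
  · simpa [coeff_C_mul_X_pow, hj.ne] using hcoeff j (by omega)
  · simpa [coeff_C_mul_X_pow, sub_eq_zero] using hcoeff n (by omega)

theorem X_pow_four_dvd_mul_sq_sub_sq_mul_sq_sub_one (a b c d : R) :
    X ^ 4 ∣ C a * X * ((C b * X) ^ 2 - (C c * X) ^ 2) * ((C d * X) ^ 2 - 1 ^ 2) -
      C (-(a * (b ^ 2 - c ^ 2))) * X ^ 3 :=
  ⟨C (a * (b ^ 2 - c ^ 2) * d ^ 2) * X, by simp only [map_mul, map_neg, map_sub, map_pow]; ring⟩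

theorem X_pow_four_dvd_mul_sq_sub_one_mul_sq_sub_sq (a b c d : R) :
    X ^ 4 ∣ C a * X * ((C b * X) ^ 2 - 1 ^ 2) * ((C c * X) ^ 2 - (C d * X) ^ 2) -
      C (-(a * (c ^ 2 - d ^ 2))) * X ^ 3 :=
  ⟨C (a * b ^ 2 * (c ^ 2 - d ^ 2)) * X, by simp only [map_mul, map_neg, map_sub, map_pow]; ring⟩

theorem X_sq_dvd_sq_sub_sq (a b : R) : X ^ 2 ∣ (C a * X) ^ 2 - (C b * X) ^ 2 :=
  dvd_sub (pow_dvd_pow_of_dvd (dvd_mul_left X _) 2) (pow_dvd_pow_of_dvd (dvd_mul_left X _) 2)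

theorem X_pow_four_dvd_sq_sub_sq_mul_sq_sub_sq (a b c d : R) :
    X ^ 4 ∣ ((C a * X) ^ 2 - (C b * X) ^ 2) * ((C c * X) ^ 2 - (C d * X) ^ 2) := by
  simpa only [← pow_add] using mul_dvd_mul (X_sq_dvd_sq_sub_sq a b) (X_sq_dvd_sq_sub_sq c d)

end Polynomial

/-- On the exceptional divisor over the point `q₅ = (0:0:0:0:1)`: each
`fᵢ(ty₁, ty₂, ty₃, ty₄, 1)`, as a polynomial in `t`, has coefficients of
`t⁰, t¹, t²` equal to `0` and coefficient of `t³` equal to `−gᵢ`, where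
`g = (y₁(y₂²−y₃²), y₁(y₃²−y₄²), y₂(y₁²−y₃²), y₂(y₁²−y₄²), y₃(y₁²−y₂²),
y₃(y₁²−y₄²), y₄(y₁²−y₂²), y₄(y₁²−y₃²), 0, 0)`; hence `Φ` induces on this
divisor the map `(y₁:y₂:y₃:y₄) ↦ (y₁(y₂²−y₃²) : … : y₄(y₁²−y₃²) : 0 : 0)`. -/
theorem map_on_exceptional_divisor_q5 (y₁ y₂ y₃ y₄ : ℂ) (i : Fin 10) :
    (quintics ![C y₁ * X, C y₂ * X, C y₃ * X, C y₄ * X, 1] i).coeff 0 = 0 ∧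
    (quintics ![C y₁ * X, C y₂ * X, C y₃ * X, C y₄ * X, 1] i).coeff 1 = 0 ∧
    (quintics ![C y₁ * X, C y₂ * X, C y₃ * X, C y₄ * X, 1] i).coeff 2 = 0 ∧
    (quintics ![C y₁ * X, C y₂ * X, C y₃ * X, C y₄ * X, 1] i).coeff 3 =
      -(![y₁ * (y₂ ^ 2 - y₃ ^ 2), y₁ * (y₃ ^ 2 - y₄ ^ 2),
          y₂ * (y₁ ^ 2 - y₃ ^ 2), y₂ * (y₁ ^ 2 - y₄ ^ 2),
          y₃ * (y₁ ^ 2 - y₂ ^ 2), y₃ * (y₁ ^ 2 - y₄ ^ 2),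
          y₄ * (y₁ ^ 2 - y₂ ^ 2), y₄ * (y₁ ^ 2 - y₃ ^ 2), 0, 0] i) := by
  refine (fun h : (∀ j < 3, _) ∧ _ =>
    ⟨h.1 0 (by norm_num), h.1 1 (by norm_num), h.1 2 (by norm_num), h.2⟩)
    (coeff_of_X_pow_succ_dvd_sub_C_mul_X_pow ?_)
  fin_cases i <;>
    simp only [quintics, Fin.reduceFinMk, Matrix.cons_val, neg_zero, map_zero, zero_mul, sub_zero,
      one_mul] <;>
    first
    | with_reducible exact X_pow_four_dvd_mul_sq_sub_sq_mul_sq_sub_one ..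
    | with_reducible exact X_pow_four_dvd_mul_sq_sub_one_mul_sq_sub_sq ..
    | with_reducible exact X_pow_four_dvd_sq_sub_sq_mul_sq_sub_sq ..
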